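/- For any computably enumerable set S of pairs (x, n) such that membership of (x,n) in S implies K(x) > n, the set of values n appearing in S is bounded above. -/

import Mathlib

/-- Programs and outputs are finite bit strings. -/
abbrev Str := List Bool

/-- A computer is a partial computable function from bit strings to bit strings.
A universal computer can simulate any partial computable function via a fixed prefix. -/
def Univ (U : Str →. Str) : Prop :=
  Partrec U ∧ ∀ F : Str →. Str, Partrec F → ∃ e : Str, ∀ p : Str, U (e ++ p) = F p

/-- A program `p` is elegant (for `U`) if it halts and no strictly shorter program
produces the same output. -/
def Elegant (U : Str →. Str) (p : Str) : Prop :=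
  ∃ x : Str, x ∈ U p ∧ ∀ q : Str, q.length < p.length → x ∉ U q

/-- Kolmogorov complexity of `x` relative to `U`: the length of a shortest program for `x`. -/
noncomputable def Kc (U : Str →. Str) (x : Str) : ℕ :=
  sInf { n : ℕ | ∃ p : Str, p.length = n ∧ x ∈ U p }

/-- The domain of `U` is prefix-free. -/
def PrefixFreeDom (U : Str →. Str) : Prop :=
  ∀ p q : Str, (U p).Dom → (U q).Dom → p <+: q → p = q

/-- A universal prefix-free machine. -/
def UnivPF (U : Str →. Str) : Prop :=
  Partrec U ∧ PrefixFreeDom U ∧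
    ∀ F : Str →. Str, Partrec F → PrefixFreeDom F →
      ∃ e : Str, ∀ p : Str, U (e ++ p) = F p

open Classical in
/-- The halting probability `Ω = Σ_{U(p)↓} 2^(-|p|)`. -/
noncomputable def Omega (U : Str →. Str) : ℝ :=
  ∑' p : Str, if (U p).Dom then ((1 : ℝ) / 2) ^ p.length else 0

/-- The `n`-th bit (0-indexed) of the binary expansion of a real `α`. -/
noncomputable def nthBit (α : ℝ) (n : ℕ) : Bool :=
  decide (⌊α * 2 ^ (n + 1)⌋ % 2 = 1)

/-- The string of the first `n` binary digits of `α`. -/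
noncomputable def bitsOf (α : ℝ) (n : ℕ) : Str :=
  (List.range n).map (nthBit α)

/-- An injective encoding of a pair (string, number) as a bit string,
used to express the sentence `K(x) > n`. -/
def encPair (x : Str) (n : ℕ) : Str :=
  (x.flatMap fun b => [b, b]) ++ [true, false] ++ List.replicate n true

/-- An injective encoding of the sentence `the i-th bit of Ω is b`. -/
def encBit (i : ℕ) (b : Bool) : Str :=
  List.replicate i true ++ [false, b]

/-- A set of pairs is computably enumerable. -/
def CE (S : Set (Str × ℕ)) : Prop :=
  ∃ f : ℕ → Option (Str × ℕ), Computable f ∧ S = { a | ∃ k, f k = some a }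

/-- A set of strings is computably enumerable. -/
def CEStr (S : Set Str) : Prop :=
  ∃ f : ℕ → Option Str, Computable f ∧ S = { a | ∃ k, f k = some a }

/-!
Berry's paradox. From an enumeration of `S`, a machine can search on input `p` for a pair
`(x, n) ∈ S` with `n ≥ 2 |p|` and print `x`. If `e` is its index in the universal machine, then
`K(x) ≤ |e| + |p| < 2 |p| ≤ n` as soon as `|p| > |e|`, contradicting soundness; so, taking
`|p| = |e| + 1`, no `n` occurring in `S` exceeds `2 |e| + 1`.
-/

section FirstAtLeast

variable {α : Type*}

def firstAtLeast (f : ℕ → Option (α × ℕ)) (t : ℕ) : Part α :=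
  Nat.rfindOpt fun k => (f k).bind fun a => if t ≤ a.2 then some a.1 else none

theorem firstAtLeast_partrec [Primcodable α] {f : ℕ → Option (α × ℕ)} (hf : Computable f) :
    Partrec (firstAtLeast f) :=
  Partrec.rfindOpt <| (hf.comp Computable.snd).option_bind <| Primrec.to_comp <|
    Primrec.ite (Primrec.nat_le.comp (Primrec.fst.comp Primrec.fst) (Primrec.snd.comp Primrec.snd))
      (Primrec.option_some.comp (Primrec.fst.comp Primrec.snd)) (Primrec.const none)

theorem firstAtLeast_dom {f : ℕ → Option (α × ℕ)} {t k n : ℕ} {x : α}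
    (hk : f k = some (x, n)) (ht : t ≤ n) : (firstAtLeast f t).Dom :=
  Nat.rfindOpt_dom.2 ⟨k, x, by simp [hk, ht]⟩

theorem exists_le_of_mem_firstAtLeast {f : ℕ → Option (α × ℕ)} {t : ℕ} {x : α}
    (hx : x ∈ firstAtLeast f t) : ∃ k n, f k = some (x, n) ∧ t ≤ n := by
  obtain ⟨k, hk⟩ := Nat.rfindOpt_spec hx
  obtain ⟨⟨y, n⟩, hkn, hy⟩ := Option.bind_eq_some_iff.1 hk
  by_cases ht : t ≤ n
  · simp only [ht, if_true, Option.some.injEq] at hy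
    exact ⟨k, n, hy ▸ hkn, ht⟩
  · simp [ht] at hy

end FirstAtLeast

theorem Kc_le_length {U : Str →. Str} {x p : Str} (h : x ∈ U p) : Kc U x ≤ p.length :=
  Nat.sInf_le ⟨p, rfl, h⟩

/-- Abstract Chaitin incompleteness: if `S` is a c.e. set of pairs `(x, n)` such that
`(x, n) ∈ S` implies `K(x) > n`, then the values `n` occurring in `S` are bounded. -/
theorem stmt7 (U : Str →. Str) (hU : Univ U) (S : Set (Str × ℕ)) (hS : CE S)
    (hsound : ∀ (x : Str) (n : ℕ), (x, n) ∈ S → n < Kc U x) :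
    ∃ N : ℕ, ∀ (x : Str) (n : ℕ), (x, n) ∈ S → n ≤ N := by
  obtain ⟨f, hf, rfl⟩ := hS
  have hlen : Computable fun p : Str => 2 * p.length :=
    (Primrec.nat_mul.comp (Primrec.const 2) Primrec.list_length).to_comp
  obtain ⟨e, he⟩ := hU.2 _ ((firstAtLeast_partrec hf).comp hlen)
  refine ⟨2 * e.length + 1, fun x n ⟨k, hk⟩ => ?_⟩
  by_contra! hn
  obtain ⟨p, hp⟩ : ∃ p : Str, p.length = e.length + 1 := ⟨List.replicate _ true, List.length_replicate⟩
  obtain ⟨y, hy⟩ := Part.dom_iff_mem.1 (firstAtLeast_dom (t := 2 * p.length) hk (by omega))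
  obtain ⟨k', n', hk', hn'⟩ := exists_le_of_mem_firstAtLeast hy
  have hKc : Kc U y ≤ (e ++ p).length := Kc_le_length (by rw [he p]; exact hy)
  have hsound' := hsound y n' ⟨k', hk'⟩
  simp only [List.length_append] at hKc
  omega
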